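/- arXiv:2305.12451 — 2 statements merged into one kernel-verified Lean document; each statement's English description precedes it below -/
import Mathlib

section
/- If the end-effector position satisfies x = y = 0 and the polynomial inverse kinematics system has a solution, then for every angle θ₁ there is a solution with that value of θ₁; in particular, the solution set is infinite and the joint angle θ₁ is not uniquely determined. -/
/-- The polynomial inverse kinematics system of the EV3 manipulator. -/
def IKSys (x y z c₁ s₁ c₄ s₄ c₇ s₇ : ℝ) : Prop :=
  120 * c₁ * c₄ * s₇ - 16 * c₁ * c₄ + 120 * c₁ * s₄ * c₇ + 136 * c₁ * s₄
      - 44 * Real.sqrt 2 * c₁ + x = 0 ∧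
  120 * s₁ * c₄ * s₇ - 16 * s₁ * c₄ + 120 * s₁ * s₄ * c₇ + 136 * s₁ * s₄
      - 44 * Real.sqrt 2 * s₁ + y = 0 ∧
  -120 * c₄ * c₇ - 136 * c₄ + 120 * s₄ * s₇ - 16 * s₄ - 104 - 44 * Real.sqrt 2 + z = 0 ∧
  s₁ ^ 2 + c₁ ^ 2 = 1 ∧ s₄ ^ 2 + c₄ ^ 2 = 1 ∧ s₇ ^ 2 + c₇ ^ 2 = 1

lemma ik_key (z : ℝ)
    (h : ∃ c₁ s₁ c₄ s₄ c₇ s₇ : ℝ, IKSys 0 0 z c₁ s₁ c₄ s₄ c₇ s₇) :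
    ∃ c₄ s₄ c₇ s₇ : ℝ, ∀ c₁ s₁ : ℝ, s₁ ^ 2 + c₁ ^ 2 = 1 →
      IKSys 0 0 z c₁ s₁ c₄ s₄ c₇ s₇ := by
  obtain ⟨c₁, s₁, c₄, s₄, c₇, s₇, h1, h2, h3, h4, h5, h6⟩ := h
  set u : ℝ := 120 * c₄ * s₇ - 16 * c₄ + 120 * s₄ * c₇ + 136 * s₄ - 44 * Real.sqrt 2 with hu
  have hc : c₁ * u = 0 := by rw [hu]; nlinarith [h1]
  have hs : s₁ * u = 0 := by rw [hu]; nlinarith [h2]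
  have hu0 : u = 0 := by
    have h' : u * (s₁ ^ 2 + c₁ ^ 2) = 0 := by linear_combination s₁ * hs + c₁ * hc
    rw [h4, mul_one] at h'; exact h'
  refine ⟨c₄, s₄, c₇, s₇, fun a b hab => ⟨?_, ?_, h3, hab, h5, h6⟩⟩
  · have : a * u = 0 := by rw [hu0]; ring
    rw [hu] at this; nlinarith [this]
  · have : b * u = 0 := by rw [hu0]; ring
    rw [hu] at this; nlinarith [this]

theorem ik_on_z_axis_theta1_free (z : ℝ)
    (h : ∃ c₁ s₁ c₄ s₄ c₇ s₇ : ℝ, IKSys 0 0 z c₁ s₁ c₄ s₄ c₇ s₇) :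
    (∀ θ₁ : ℝ, ∃ c₄ s₄ c₇ s₇ : ℝ,
        IKSys 0 0 z (Real.cos θ₁) (Real.sin θ₁) c₄ s₄ c₇ s₇) ∧
      {p : ℝ × ℝ × ℝ × ℝ × ℝ × ℝ |
        IKSys 0 0 z p.1 p.2.1 p.2.2.1 p.2.2.2.1 p.2.2.2.2.1 p.2.2.2.2.2}.Infinite := by
  obtain ⟨c₄, s₄, c₇, s₇, hk⟩ := ik_key z h
  constructor
  · intro θ₁
    exact ⟨c₄, s₄, c₇, s₇, hk _ _ (Real.sin_sq_add_cos_sq θ₁)⟩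
  · have hinf : (Set.Icc (0:ℝ) 1).Infinite := Set.infinite_coe_iff.mp (Set.Icc.infinite (by norm_num))
    apply Set.Infinite.mono
      (s := (fun t : ℝ => ((t, Real.sqrt (1 - t ^ 2), c₄, s₄, c₇, s₇) :
        ℝ × ℝ × ℝ × ℝ × ℝ × ℝ)) '' Set.Icc 0 1)
    · rintro p ⟨t, ht, rfl⟩
      simp only [Set.mem_setOf_eq]
      apply hk
      have h1 : (1 : ℝ) - t ^ 2 ≥ 0 := by
        rcases ht with ⟨h0, h1⟩; nlinarith
      rw [Real.sq_sqrt h1]; ring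
    · apply hinf.image
      intro a _ b _ hab
      exact congrArg Prod.fst hab
end

section
/- If (c₁, s₁, c₄, s₄, c₇, s₇) solves the polynomial inverse kinematics system for position (x, y, z), then for any θ, the tuple obtained by replacing (c₁, s₁) with (c₁cos θ − s₁sin θ, s₁cos θ + c₁sin θ) solves the system for the position (x cos θ − y sin θ, x sin θ + y cos θ, z). -/
theorem ik_rotational_symmetry (x y z c₁ s₁ c₄ s₄ c₇ s₇ θ : ℝ)
    (h : IKSys x y z c₁ s₁ c₄ s₄ c₇ s₇) :
    IKSys (x * Real.cos θ - y * Real.sin θ) (x * Real.sin θ + y * Real.cos θ) z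
      (c₁ * Real.cos θ - s₁ * Real.sin θ) (s₁ * Real.cos θ + c₁ * Real.sin θ)
      c₄ s₄ c₇ s₇ := by
  obtain ⟨h1, h2, h3, h4, h5, h6⟩ := h
  have hp := Real.sin_sq_add_cos_sq θ
  exact ⟨by linear_combination Real.cos θ * h1 - Real.sin θ * h2,
    by linear_combination Real.sin θ * h1 + Real.cos θ * h2,
    h3,
    by linear_combination (Real.sin θ ^ 2 + Real.cos θ ^ 2) * h4 + hp,
    h5, h6⟩
end
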